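/- arXiv:math/9705217 — 3 statements merged into one kernel-verified Lean document; each statement's English description precedes it below -/
import Mathlib

section
/- If a rotation f of ℝ³ about a line ℓ preserves a circle C, then ℓ passes through the center of C, and either ℓ is perpendicular to the plane of C, or ℓ lies in the plane of C and f is a rotation by angle π. -/
open RealInnerProductSpace

set_option maxHeartbeats 2000000 in
/-- If a rotation f of ℝ³ about a line ℓ preserves a circle C, then
ℓ passes through the center of C, and either ℓ is perpendicular to the plane of C,
or ℓ lies in the plane of C and f is a rotation by angle π. -/
theorem stmt_2
    (U : Matrix (Fin 3) (Fin 3) ℝ)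
    (hU : U ∈ Matrix.orthogonalGroup (Fin 3) ℝ)
    (hdet : U.det = 1)
    (u : EuclideanSpace ℝ (Fin 3))
    (f : EuclideanSpace ℝ (Fin 3) → EuclideanSpace ℝ (Fin 3))
    (hf : ∀ x, f x = Matrix.toEuclideanLin U x + u)
    -- f is a rotation about the line ℓ = {p + t • v}: its fixed point set is exactly ℓ
    (p v : EuclideanSpace ℝ (Fin 3)) (hv : v ≠ 0)
    (hfix : {x | f x = x} = {x | ∃ t : ℝ, x = p + t • v})
    -- the circle C: center c, radius r > 0, lying in the plane through c spanned by a, b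
    (c a b : EuclideanSpace ℝ (Fin 3)) (r : ℝ) (hr : 0 < r)
    (hab : LinearIndependent ℝ ![a, b])
    (hC : f '' {x | (∃ s t : ℝ, x = c + s • a + t • b) ∧ dist x c = r}
        = {x | (∃ s t : ℝ, x = c + s • a + t • b) ∧ dist x c = r}) :
    (∃ t : ℝ, c = p + t • v) ∧
      ((⟪v, a⟫ = 0 ∧ ⟪v, b⟫ = 0) ∨
        ((∃ s t : ℝ, v = s • a + t • b) ∧ ∀ x, f (f x) = x)) := by
  classical
  set T := Matrix.toEuclideanLin U with hTdef
  -- T preserves the inner product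
  have hTin : ∀ x y : EuclideanSpace ℝ (Fin 3), ⟪T x, T y⟫ = ⟪x, y⟫ := by
    intro x y
    have h1 : U.conjTranspose * U = 1 := Matrix.mem_unitaryGroup_iff'.mp hU
    have h2 : ∀ z, LinearMap.adjoint (Matrix.toEuclideanLin U) (Matrix.toEuclideanLin U z) = z := by
      intro z
      rw [← Matrix.toEuclideanLin_conjTranspose_eq_adjoint, ← LinearMap.comp_apply,
        Matrix.toEuclideanLin_eq_toLin, ← Matrix.toLin_mul, h1]
      simp
    rw [hTdef, ← LinearMap.adjoint_inner_left, h2]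
  have hTnorm : ∀ x, ‖T x‖ = ‖x‖ := by
    intro x
    have h := hTin x x
    rw [real_inner_self_eq_norm_sq, real_inner_self_eq_norm_sq] at h
    nlinarith [norm_nonneg (T x), norm_nonneg x]
  have hdist : ∀ x y, dist (f x) (f y) = dist x y := by
    intro x y
    rw [hf, hf, dist_eq_norm, dist_eq_norm]
    have h : (T x + u) - (T y + u) = T (x - y) := by rw [map_sub]; abel
    rw [h, hTnorm]
  have ha0 : a ≠ 0 := by simpa using hab.ne_zero 0
  have hb0 : b ≠ 0 := by simpa using hab.ne_zero 1
  set C := {x : EuclideanSpace ℝ (Fin 3) |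
      (∃ s t : ℝ, x = c + s • a + t • b) ∧ dist x c = r} with hCdef
  set w₀ : EuclideanSpace ℝ (Fin 3) := (r / ‖a‖) • a with hw₀
  have hw₀norm : ‖w₀‖ = r := by
    rw [hw₀, norm_smul, Real.norm_eq_abs, abs_div, abs_of_pos hr,
      abs_of_pos (norm_pos_iff.mpr ha0)]
    exact div_mul_cancel₀ r (norm_ne_zero_iff.mpr ha0)
  have hmemp : c + w₀ ∈ C := by
    refine ⟨⟨r / ‖a‖, 0, by simp [hw₀]⟩, ?_⟩
    simp [dist_eq_norm, hw₀norm]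
  have hmemm : c - w₀ ∈ C := by
    refine ⟨⟨-(r / ‖a‖), 0, by simp [hw₀]; abel⟩, ?_⟩
    have : c - w₀ - c = -w₀ := by abel
    simp [dist_eq_norm, this, hw₀norm]
  -- the center is fixed
  have hfc : f c = c := by
    obtain ⟨z₁, hz₁C, hz₁⟩ : ∃ z ∈ C, f z = c + w₀ := by
      have := hmemp; rw [← hC] at this; obtain ⟨z, hz, hz'⟩ := this; exact ⟨z, hz, hz'⟩
    obtain ⟨z₂, hz₂C, hz₂⟩ : ∃ z ∈ C, f z = c - w₀ := by
      have := hmemm; rw [← hC] at this; obtain ⟨z, hz, hz'⟩ := this; exact ⟨z, hz, hz'⟩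
    have d₁ : dist (f c) (c + w₀) = r := by
      rw [← hz₁, hdist, dist_comm]; exact hz₁C.2
    have d₂ : dist (f c) (c - w₀) = r := by
      rw [← hz₂, hdist, dist_comm]; exact hz₂C.2
    have hpar := parallelogram_law_with_norm ℝ (f c - c) w₀
    have e₁ : ‖f c - c - w₀‖ = r := by
      rw [show f c - c - w₀ = f c - (c + w₀) by abel, ← dist_eq_norm, d₁]
    have e₂ : ‖f c - c + w₀‖ = r := by
      rw [show f c - c + w₀ = f c - (c - w₀) by abel, ← dist_eq_norm, d₂]
    have hz : ‖f c - c‖ = 0 := by nlinarith [norm_nonneg (f c - c)]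
    have := norm_eq_zero.mp hz
    have := sub_eq_zero.mp this
    exact this
  have hcline : ∃ t : ℝ, c = p + t • v := by
    have h : c ∈ {x | f x = x} := hfc
    rwa [hfix] at h
  refine ⟨hcline, ?_⟩
  obtain ⟨t₀, hct₀⟩ := hcline
  have hfixpt : ∀ t : ℝ, f (p + t • v) = p + t • v := by
    intro t
    have h : (p + t • v) ∈ {x : EuclideanSpace ℝ (Fin 3) | ∃ t : ℝ, x = p + t • v} := ⟨t, rfl⟩
    rwa [← hfix] at h
  have hfp : f p = p := by simpa using hfixpt 0
  have hfp' : T p + u = p := by rw [← hf]; exact hfp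
  have hTc : T c + u = c := by rw [← hf]; exact hfc
  have hTv : T v = v := by
    have h1 : T (p + (1:ℝ) • v) + u = p + (1:ℝ) • v := by rw [← hf]; exact hfixpt 1
    rw [one_smul, map_add] at h1
    calc T v = (T p + T v + u) - (T p + u) := by abel
      _ = (p + v) - p := by rw [h1, hfp']
      _ = v := by abel
  set P := Submodule.span ℝ {a, b} with hPdef
  have haP : a ∈ P := Submodule.subset_span (by simp)
  have hbP : b ∈ P := Submodule.subset_span (by simp)
  have hfinP : Module.finrank ℝ P = 2 := by
    have hrange : Set.range ![a, b] = {a, b} := by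
      ext x
      simp [Fin.exists_fin_two]
      tauto
    rw [hPdef, ← hrange, finrank_span_eq_card hab]
    simp
  have hTsph : ∀ w : EuclideanSpace ℝ (Fin 3), w ∈ P → ‖w‖ = r → T w ∈ P := by
    intro w hwP hwr
    obtain ⟨s, t, hst⟩ := Submodule.mem_span_pair.mp hwP
    have hcw : c + w ∈ C := by
      refine ⟨⟨s, t, by rw [← hst]; abel⟩, by simp [dist_eq_norm, hwr]⟩
    have himg : f (c + w) ∈ C := by
      rw [← hC]; exact ⟨c + w, hcw, rfl⟩
    have hfcw : f (c + w) = c + T w := by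
      rw [hf, map_add]
      calc T c + T w + u = (T c + u) + T w := by abel
        _ = c + T w := by rw [hTc]
    rw [hfcw] at himg
    obtain ⟨⟨s', t', hst'⟩, _⟩ := himg
    apply Submodule.mem_span_pair.mpr
    refine ⟨s', t', ?_⟩
    have h5 : c + T w = c + (s' • a + t' • b) := by rw [hst']; abel
    exact (add_left_cancel h5).symm
  have hTP : ∀ w ∈ P, T w ∈ P := by
    intro w hw
    rcases eq_or_ne w 0 with rfl | h0
    · simpa using P.zero_mem
    · have hnw : (0:ℝ) < ‖w‖ := norm_pos_iff.mpr h0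
      have h1 : T ((r / ‖w‖) • w) ∈ P := by
        apply hTsph _ (P.smul_mem _ hw)
        rw [norm_smul, Real.norm_eq_abs, abs_div, abs_of_pos hr, abs_of_pos hnw]
        exact div_mul_cancel₀ r hnw.ne'
      have h2 : T w = (‖w‖ / r) • T ((r / ‖w‖) • w) := by
        rw [map_smul, smul_smul]
        rw [div_mul_div_comm, mul_comm, ← div_mul_div_comm, div_self hr.ne',
          div_self hnw.ne', one_mul, one_smul]
      rw [h2]
      exact P.smul_mem _ h1
  have hTinj : Function.Injective T := by
    intro x y hxy
    have h : ‖x - y‖ = 0 := by rw [← hTnorm, map_sub, hxy, sub_self, norm_zero]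
    exact sub_eq_zero.mp (norm_eq_zero.mp h)
  have hT'surj : ∀ w ∈ P, ∃ w' ∈ P, T w' = w := by
    set T' : P →ₗ[ℝ] P := T.restrict hTP with hT'def
    have hT'inj : Function.Injective T' := by
      intro x y hxy
      have h6 : T x.1 = T y.1 := congrArg Subtype.val hxy
      exact Subtype.ext (hTinj h6)
    have hsurj := (LinearMap.injective_iff_surjective).mp hT'inj
    intro w hw
    obtain ⟨w', hw'⟩ := hsurj ⟨w, hw⟩
    exact ⟨w'.1, w'.2, congrArg Subtype.val hw'⟩
  have hTPperp : ∀ m ∈ Pᗮ, T m ∈ Pᗮ := by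
    intro m hm
    rw [Submodule.mem_orthogonal]
    intro w hw
    obtain ⟨w', hw'P, hw'⟩ := hT'surj w hw
    rw [← hw', hTin]
    exact (Submodule.mem_orthogonal P m).mp hm w' hw'P
  have hfinperp : Module.finrank ℝ Pᗮ = 1 := by
    have h := Submodule.finrank_add_finrank_orthogonal (K := P)
    rw [hfinP, finrank_euclideanSpace_fin] at h
    omega
  obtain ⟨n₁, hn₁0, hn₁⟩ := finrank_eq_one_iff'.mp hfinperp
  set N : EuclideanSpace ℝ (Fin 3) := n₁.1 with hNdef
  have hN0 : N ≠ 0 := fun h => hn₁0 (Subtype.ext h)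
  have hNperp : N ∈ Pᗮ := n₁.2
  obtain ⟨ε, hε⟩ := hn₁ ⟨T N, hTPperp N hNperp⟩
  have hTN : T N = ε • N := by
    have h7 := congrArg Subtype.val hε
    simpa using h7.symm
  have hεabs : ε = 1 ∨ ε = -1 := by
    have h := hTnorm N
    rw [hTN, norm_smul, Real.norm_eq_abs] at h
    have hNn : ‖N‖ ≠ 0 := norm_ne_zero_iff.mpr hN0
    have habs : |ε| = 1 := by
      rcases mul_eq_mul_right_iff.mp (h.trans (one_mul ‖N‖).symm) with h' | h'
      · exact h'
      · exact absurd h' hNn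
    rcases (abs_eq (by norm_num : (0:ℝ) ≤ 1)).mp habs with h | h
    · exact Or.inl h
    · exact Or.inr h
  rcases hεabs with hε1 | hε1
  · -- T N = N : the axis is perpendicular to the plane
    rw [hε1, one_smul] at hTN
    have hfcN : f (c + N) = c + N := by
      rw [hf, map_add]
      calc T c + T N + u = (T c + u) + T N := by abel
        _ = c + N := by rw [hTc, hTN]
    have hmem : (c + N) ∈ {x : EuclideanSpace ℝ (Fin 3) | f x = x} := hfcN
    rw [hfix] at hmem
    obtain ⟨t₁, ht₁⟩ := hmem
    have hNv : N = (t₁ - t₀) • v := by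
      rw [hct₀] at ht₁
      calc N = (p + t₀ • v + N) - (p + t₀ • v) := by abel
        _ = (p + t₁ • v) - (p + t₀ • v) := by rw [← ht₁]
        _ = (t₁ - t₀) • v := by rw [sub_smul]; abel
    have hne : t₁ - t₀ ≠ 0 := by
      intro h; rw [h, zero_smul] at hNv; exact hN0 hNv
    have hvperp : v ∈ Pᗮ := by
      have hvN : v = (t₁ - t₀)⁻¹ • N := by
        rw [hNv, smul_smul, inv_mul_cancel₀ hne, one_smul]
      rw [hvN]; exact Pᗮ.smul_mem _ hNperp
    exact Or.inl ⟨(Submodule.mem_orthogonal' P v).mp hvperp a haP,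
      (Submodule.mem_orthogonal' P v).mp hvperp b hbP⟩
  · -- T N = -N : the axis lies in the plane and f ∘ f = id
    rw [hε1, neg_one_smul] at hTN
    -- first, v ∈ P
    obtain ⟨y, hy, z, hz, hvyz⟩ := P.exists_add_mem_mem_orthogonal v
    obtain ⟨α, hα⟩ := hn₁ ⟨z, hz⟩
    have hzN : z = α • N := by
      have h7 := congrArg Subtype.val hα
      simpa using h7.symm
    have hTz : T z = -z := by rw [hzN, map_smul, hTN, smul_neg]
    have key : T y - y = z + z := by
      have h8 : T y + T z = y + z := by rw [← map_add, ← hvyz, hTv, hvyz]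
      rw [hTz] at h8
      calc T y - y = (T y + -z) - y + z := by abel
        _ = (y + z) - y + z := by rw [h8]
        _ = z + z := by abel
    have hyy : T y - y = 0 := by
      have hmemP' : T y - y ∈ P := Submodule.sub_mem P (hTP y hy) hy
      have hmemperp' : z + z ∈ Pᗮ := Submodule.add_mem Pᗮ hz hz
      have hin : ⟪T y - y, T y - y⟫ = 0 := by
        nth_rewrite 2 [key]
        exact (Submodule.mem_orthogonal P (z + z)).mp hmemperp' _ hmemP'
      exact inner_self_eq_zero.mp hin
    have hz0 : z = 0 := by
      rw [hyy] at key
      have h9 : z + z = 0 := key.symm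
      have : (2:ℝ) • z = 0 := by rw [two_smul]; exact h9
      rcases smul_eq_zero.mp this with h | h
      · norm_num at h
      · exact h
    have hvP : v ∈ P := by rw [hvyz, hz0, add_zero]; exact hy
    -- construct e ∈ P orthogonal to v, nonzero
    have hnv0 : ‖v‖ ≠ 0 := norm_ne_zero_iff.mpr hv
    obtain ⟨e, heP, hve, he0⟩ : ∃ e, e ∈ P ∧ ⟪v, e⟫ = 0 ∧ e ≠ 0 := by
      set e₁ : EuclideanSpace ℝ (Fin 3) := ‖v‖ ^ 2 • a - ⟪v, a⟫ • v with he₁def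
      set e₂ : EuclideanSpace ℝ (Fin 3) := ‖v‖ ^ 2 • b - ⟪v, b⟫ • v with he₂def
      have hve₁ : ⟪v, e₁⟫ = 0 := by
        rw [he₁def, inner_sub_right, real_inner_smul_right, real_inner_smul_right,
          real_inner_self_eq_norm_sq]
        ring
      have hve₂ : ⟪v, e₂⟫ = 0 := by
        rw [he₂def, inner_sub_right, real_inner_smul_right, real_inner_smul_right,
          real_inner_self_eq_norm_sq]
        ring
      have he₁P : e₁ ∈ P := Submodule.sub_mem P (P.smul_mem _ haP) (P.smul_mem _ hvP)
      have he₂P : e₂ ∈ P := Submodule.sub_mem P (P.smul_mem _ hbP) (P.smul_mem _ hvP)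
      by_cases h1 : e₁ = 0
      · refine ⟨e₂, he₂P, hve₂, ?_⟩
        intro h2
        rw [he₁def, sub_eq_zero] at h1
        rw [he₂def, sub_eq_zero] at h2
        have hv2 : ‖v‖ ^ 2 ≠ 0 := pow_ne_zero 2 hnv0
        have hvA : ⟪v, a⟫ ≠ 0 := by
          intro h3
          rw [h3, zero_smul] at h1
          rcases smul_eq_zero.mp h1 with h4 | h4
          · exact hv2 h4
          · exact ha0 h4
        have ha' : (⟪v, b⟫ * ‖v‖ ^ 2) • a = (⟪v, b⟫ * ⟪v, a⟫) • v := by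
          rw [← smul_smul, ← smul_smul, h1]
        have hb' : (⟪v, a⟫ * ‖v‖ ^ 2) • b = (⟪v, a⟫ * ⟪v, b⟫) • v := by
          rw [← smul_smul, ← smul_smul, h2]
        have hcomb : (⟪v, b⟫ * ‖v‖ ^ 2) • a + (-(⟪v, a⟫ * ‖v‖ ^ 2)) • b = 0 := by
          rw [neg_smul, ← sub_eq_add_neg, ha', hb', mul_comm ⟪v, b⟫ ⟪v, a⟫, sub_self]
        obtain ⟨hc1, hc2⟩ := (LinearIndependent.pair_iff.mp hab) _ _ hcomb
        rcases mul_eq_zero.mp (neg_eq_zero.mp hc2) with h5 | h5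
        · exact hvA h5
        · exact hv2 h5
      · exact ⟨e₁, he₁P, hve₁, h1⟩
    have hne0 : ‖e‖ ≠ 0 := norm_ne_zero_iff.mpr he0
    have hnN0 : ‖N‖ ≠ 0 := norm_ne_zero_iff.mpr hN0
    have hvn : ⟪v, N⟫ = 0 := (Submodule.mem_orthogonal P N).mp hNperp v hvP
    have hen : ⟪e, N⟫ = 0 := (Submodule.mem_orthogonal P N).mp hNperp e heP
    have hev : ⟪e, v⟫ = 0 := by rw [real_inner_comm]; exact hve
    have hNv' : ⟪N, v⟫ = 0 := by rw [real_inner_comm]; exact hvn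
    have hNe' : ⟪N, e⟫ = 0 := by rw [real_inner_comm]; exact hen
    set b3 : Fin 3 → EuclideanSpace ℝ (Fin 3) := ![‖v‖⁻¹ • v, ‖e‖⁻¹ • e, ‖N‖⁻¹ • N] with hb3
    have hb30 : b3 0 = ‖v‖⁻¹ • v := rfl
    have hb31 : b3 1 = ‖e‖⁻¹ • e := rfl
    have hb32 : b3 2 = ‖N‖⁻¹ • N := rfl
    have hON : Orthonormal ℝ b3 := by
      have hunit : ∀ w : EuclideanSpace ℝ (Fin 3), ‖w‖ ≠ 0 →
          ⟪‖w‖⁻¹ • w, ‖w‖⁻¹ • w⟫ = (1:ℝ) := by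
        intro w hw
        rw [real_inner_smul_left, real_inner_smul_right, real_inner_self_eq_norm_sq]
        field_simp
      rw [orthonormal_iff_ite]
      intro i j
      fin_cases i <;> fin_cases j <;>
        simp only [hb3, Matrix.cons_val_zero, Matrix.cons_val_one, Matrix.head_cons,
          Matrix.cons_val_two, Matrix.tail_cons, Fin.isValue, Fin.mk_one, Fin.zero_eta,
          Fin.reduceFinMk] <;>
        simp only [real_inner_smul_left, real_inner_smul_right, hve, hev, hvn, hNv', hen, hNe',
          hunit v hnv0, hunit e hne0, hunit N hnN0, mul_zero] <;> norm_num [Fin.ext_iff]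
    have hcard : Fintype.card (Fin 3) = Module.finrank ℝ (EuclideanSpace ℝ (Fin 3)) := by
      simp [finrank_euclideanSpace_fin]
    have hsp : ⊤ ≤ Submodule.span ℝ (Set.range b3) := by
      rw [← coe_basisOfOrthonormalOfCardEqFinrank hON hcard]
      exact (basisOfOrthonormalOfCardEqFinrank hON hcard).span_eq.ge
    set B : OrthonormalBasis (Fin 3) ℝ (EuclideanSpace ℝ (Fin 3)) :=
      OrthonormalBasis.mk hON hsp with hBdef
    have hB : ∀ i, B i = b3 i := fun i => by rw [hBdef, OrthonormalBasis.coe_mk]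
    -- T e = ± e
    obtain ⟨δ, hTe⟩ : ∃ δ : ℝ, T e = δ • e := by
      have hTeP : T e ∈ P := hTP e heP
      have hTev : ⟪v, T e⟫ = 0 := by
        calc ⟪v, T e⟫ = ⟪T v, T e⟫ := by rw [hTv]
          _ = ⟪v, e⟫ := hTin v e
          _ = 0 := hve
      have hTeN : ⟪N, T e⟫ = 0 := by
        rw [real_inner_comm]
        exact (Submodule.mem_orthogonal P N).mp hNperp _ hTeP
      have hrepr := B.sum_repr' (T e)
      rw [Fin.sum_univ_three] at hrepr
      have h0 : ⟪B 0, T e⟫ = 0 := by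
        rw [hB, hb30, real_inner_smul_left, hTev, mul_zero]
      have h2 : ⟪B 2, T e⟫ = 0 := by
        rw [hB, hb32, real_inner_smul_left, hTeN, mul_zero]
      rw [h0, h2, zero_smul, zero_smul, add_zero, zero_add] at hrepr
      have h3 : T e = ⟪B 1, T e⟫ • B 1 := hrepr.symm
      rw [hB, hb31, smul_smul] at h3
      exact ⟨_, h3⟩
    have hδabs : δ = 1 ∨ δ = -1 := by
      have h := hTnorm e
      rw [hTe, norm_smul, Real.norm_eq_abs] at h
      have habs : |δ| = 1 := by
        rcases mul_eq_mul_right_iff.mp (h.trans (one_mul ‖e‖).symm) with h' | h'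
        · exact h'
        · exact absurd h' hne0
      rcases (abs_eq (by norm_num : (0:ℝ) ≤ 1)).mp habs with h' | h'
      · exact Or.inl h'
      · exact Or.inr h'
    rcases hδabs with hδ1 | hδ1
    · -- impossible: T would fix the whole plane
      exfalso
      rw [hδ1, one_smul] at hTe
      have hfixP : ∀ w ∈ P, T w = w := by
        intro w hw
        have hw0 : ⟪N, w⟫ = 0 := by
          rw [real_inner_comm]
          exact (Submodule.mem_orthogonal P N).mp hNperp w hw
        have hrw := B.sum_repr' w
        rw [Fin.sum_univ_three] at hrw
        have hc2 : ⟪B 2, w⟫ = 0 := by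
          rw [hB, hb32, real_inner_smul_left, hw0, mul_zero]
        rw [hc2, zero_smul, add_zero] at hrw
        have hTB0 : T (B 0) = B 0 := by
          rw [hB, hb30, map_smul, hTv]
        have hTB1 : T (B 1) = B 1 := by
          rw [hB, hb31, map_smul, hTe]
        rw [← hrw, map_add, map_smul, map_smul, hTB0, hTB1]
      have hlinefix : ∀ w, w ∈ P → w ≠ 0 → ∃ t : ℝ, w = t • v := by
        intro w hw hw0
        have hpw : f (p + w) = p + w := by
          rw [hf, map_add, hfixP w hw]
          calc T p + w + u = (T p + u) + w := by abel
            _ = p + w := by rw [hfp']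
        have hmem : (p + w) ∈ {x : EuclideanSpace ℝ (Fin 3) | f x = x} := hpw
        rw [hfix] at hmem
        obtain ⟨t₁, ht₁⟩ := hmem
        exact ⟨t₁, by rwa [add_right_inj] at ht₁⟩
      obtain ⟨t₁, hat⟩ := hlinefix a haP ha0
      obtain ⟨t₂, hbt⟩ := hlinefix b hbP hb0
      have ht₁0 : t₁ ≠ 0 := by
        intro h; rw [h, zero_smul] at hat; exact ha0 hat
      have hcomb : t₂ • a + (-t₁) • b = 0 := by
        rw [hat, hbt, neg_smul, ← sub_eq_add_neg, smul_smul, smul_smul, mul_comm t₂ t₁, sub_self]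
      obtain ⟨hc1, hc2⟩ := (LinearIndependent.pair_iff.mp hab) _ _ hcomb
      exact ht₁0 (neg_eq_zero.mp hc2)
    · -- T e = -e : f is an involution
      rw [hδ1, neg_one_smul] at hTe
      have hTT : ∀ x, T (T x) = x := by
        have hext : T ∘ₗ T = LinearMap.id := by
          refine Module.Basis.ext B.toBasis fun i => ?_
          have hBt : B.toBasis i = b3 i := (congrFun B.coe_toBasis i).trans (hB i)
          rw [LinearMap.comp_apply, LinearMap.id_apply, hBt]
          fin_cases i
          · show T (T (b3 0)) = b3 0
            rw [hb30, map_smul, hTv, map_smul, hTv]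
          · show T (T (b3 1)) = b3 1
            rw [hb31, map_smul, hTe, map_smul, map_neg, hTe, neg_neg]
          · show T (T (b3 2)) = b3 2
            rw [hb32, map_smul, hTN, map_smul, map_neg, hTN, neg_neg]
        intro x
        have h10 := LinearMap.ext_iff.mp hext x
        simpa using h10
      have hTuu : T u + u = 0 := by
        have h1 : f (f p) = p := by rw [hfp, hfp]
        rw [hf (f p), hf p, map_add, hTT] at h1
        calc T u + u = p + T u + u - p := by abel
          _ = p - p := by rw [h1]
          _ = 0 := sub_self p
      refine Or.inr ⟨?_, ?_⟩
      · obtain ⟨s, t, hst⟩ := Submodule.mem_span_pair.mp hvP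
        exact ⟨s, t, hst.symm⟩
      · intro x
        rw [hf (f x), hf x, map_add, hTT]
        calc x + T u + u = x + (T u + u) := by abel
          _ = x := by rw [hTuu, add_zero]
end

section
/- A rotation of ℝ³ about an axis parallel to the z-axis passing through a point whose x- and y-coordinates are both odd integers cannot preserve the family of planes V = {(x,y,z) : x = 4k+2 or y = 4k+2 for some integer k}, unless it is the identity. -/
open Real

/-- Auxiliary countability lemma: an affine line with both slopes nonzero
cannot be contained in the grid {x ∈ 4ℤ+2} ∪ {y ∈ 4ℤ+2}. -/
lemma aux_countable (α β γ δ : ℝ) (hβ : β ≠ 0) (hδ : δ ≠ 0)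
    (h : ∀ t : ℝ, (∃ k : ℤ, α + β * t = 4 * k + 2) ∨ (∃ k : ℤ, γ + δ * t = 4 * k + 2)) :
    False := by
  have hA : {t : ℝ | ∃ k : ℤ, α + β * t = 4 * k + 2}.Countable := by
    refine (Set.countable_range (fun k : ℤ => (4 * (k : ℝ) + 2 - α) / β)).mono ?_
    rintro t ⟨k, hk⟩
    exact ⟨k, by field_simp; linarith⟩
  have hB : {t : ℝ | ∃ k : ℤ, γ + δ * t = 4 * k + 2}.Countable := by
    refine (Set.countable_range (fun k : ℤ => (4 * (k : ℝ) + 2 - γ) / δ)).mono ?_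
    rintro t ⟨k, hk⟩
    exact ⟨k, by field_simp; linarith⟩
  have huniv : (Set.univ : Set ℝ).Countable := by
    refine (hA.union hB).mono ?_
    intro t _
    rcases h t with h1 | h2
    · exact Or.inl h1
    · exact Or.inr h2
  exact not_countable (Set.countable_univ_iff.mp huniv)

/-- A rotation of ℝ³ about an axis parallel to the z-axis passing
through a point whose x- and y-coordinates are both odd integers cannot preserve
the family of planes V = {(x,y,z) : x = 4k+2 or y = 4k+2, k ∈ ℤ}, unless it is
the identity. -/
theorem stmt_4
    (a b : ℝ)
    (ha : ∃ m : ℤ, a = 2 * m + 1) (hb : ∃ n : ℤ, b = 2 * n + 1)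
    (θ : ℝ)
    (f : ℝ × ℝ × ℝ → ℝ × ℝ × ℝ)
    -- f is the rotation by angle θ about the vertical axis through (a, b, ·)
    (hf : ∀ q : ℝ × ℝ × ℝ,
      f q = (a + Real.cos θ * (q.1 - a) - Real.sin θ * (q.2.1 - b),
             b + Real.sin θ * (q.1 - a) + Real.cos θ * (q.2.1 - b),
             q.2.2))
    -- f preserves the family of planes V
    (hV : f '' {q : ℝ × ℝ × ℝ | (∃ k : ℤ, q.1 = 4 * k + 2) ∨ (∃ k : ℤ, q.2.1 = 4 * k + 2)}
        = {q : ℝ × ℝ × ℝ | (∃ k : ℤ, q.1 = 4 * k + 2) ∨ (∃ k : ℤ, q.2.1 = 4 * k + 2)}) :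
    ∀ q, f q = q := by
  obtain ⟨m, ham⟩ := ha
  obtain ⟨n, hbn⟩ := hb
  set c := Real.cos θ with hc
  set s := Real.sin θ with hs
  have hpyth : s ^ 2 + c ^ 2 = 1 := Real.sin_sq_add_cos_sq θ
  -- forward preservation
  have hmem : ∀ q : ℝ × ℝ × ℝ,
      ((∃ k : ℤ, q.1 = 4 * k + 2) ∨ (∃ k : ℤ, q.2.1 = 4 * k + 2)) →
      ((∃ k : ℤ, (f q).1 = 4 * k + 2) ∨ (∃ k : ℤ, (f q).2.1 = 4 * k + 2)) := by
    intro q hq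
    have : f q ∈ f '' {q : ℝ × ℝ × ℝ |
        (∃ k : ℤ, q.1 = 4 * k + 2) ∨ (∃ k : ℤ, q.2.1 = 4 * k + 2)} :=
      Set.mem_image_of_mem f hq
    rw [hV] at this
    exact this
  -- First, show s = 0 and c = 1.
  have key : s = 0 ∧ c = 1 := by
    by_cases hs0 : s = 0
    · have hc2 : c ^ 2 = 1 := by nlinarith
      have : c = 1 ∨ c = -1 := by
        have h0 : (c - 1) * (c + 1) = 0 := by nlinarith
        rcases mul_eq_zero.mp h0 with h | h
        · exact Or.inl (by linarith)
        · exact Or.inr (by linarith)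
      rcases this with h1 | hm1
      · exact ⟨hs0, h1⟩
      · -- half turn: point (2,1,0) maps to (2a-2, 2b-1, 0), not in V
        exfalso
        have h := hmem (2, 1, 0) (Or.inl ⟨0, by norm_num⟩)
        rw [hf] at h
        simp only [hs0, hm1] at h
        rcases h with ⟨k, hk⟩ | ⟨k, hk⟩
        · have : (4 * m : ℝ) = 4 * k + 2 := by
            rw [ham] at hk; push_cast at hk ⊢; linarith
          have : (4 * m : ℤ) = 4 * k + 2 := by exact_mod_cast this
          omega
        · have : (4 * n + 1 : ℝ) = 4 * k + 2 := by
            rw [hbn] at hk; push_cast at hk ⊢; linarith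
          have : (4 * n + 1 : ℤ) = 4 * k + 2 := by exact_mod_cast this
          omega
    · exfalso
      by_cases hc0 : c = 0
      · -- quarter turn: s = ±1, parity contradiction
        have hs2 : s ^ 2 = 1 := by nlinarith
        have hspm : s = 1 ∨ s = -1 := by
          have h0 : (s - 1) * (s + 1) = 0 := by nlinarith
          rcases mul_eq_zero.mp h0 with h | h
          · exact Or.inl (by linarith)
          · exact Or.inr (by linarith)
        rcases hspm with h1 | hm1
        · -- s = 1
          have hA := hmem (2, b + (a - 1), 0) (Or.inl ⟨0, by norm_num⟩)
          have hB := hmem (a + (1 - b), 2, 0) (Or.inr ⟨0, by norm_num⟩)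
          rw [hf] at hA hB
          simp only [hc0, h1] at hA hB
          -- hA : first coord = 1, second = b + 2 - a ; need b+2-a = 4k+2
          rcases hA with ⟨k, hk⟩ | ⟨k, hk⟩
          · have : (1 : ℝ) = 4 * k + 2 := by linarith [hk]
            have : (1 : ℤ) = 4 * k + 2 := by exact_mod_cast this
            omega
          · have h2 : (2 * n + 1 + 2 - (2 * m + 1) : ℝ) = 4 * k + 2 := by
              rw [ham, hbn] at hk; push_cast at hk ⊢; linarith
            have h2' : (2 * n + 1 + 2 - (2 * m + 1) : ℤ) = 4 * k + 2 := by
              exact_mod_cast h2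
            rcases hB with ⟨j, hj⟩ | ⟨j, hj⟩
            · have h3 : (2 * m + 1 + (2 * n + 1) - 2 : ℝ) = 4 * j + 2 := by
                rw [ham, hbn] at hj; push_cast at hj ⊢; linarith
              have h3' : (2 * m + 1 + (2 * n + 1) - 2 : ℤ) = 4 * j + 2 := by
                exact_mod_cast h3
              omega
            · have : (1 : ℝ) = 4 * j + 2 := by linarith [hj]
              have : (1 : ℤ) = 4 * j + 2 := by exact_mod_cast this
              omega
        · -- s = -1
          have hA := hmem (2, 1 - a + b, 0) (Or.inl ⟨0, by norm_num⟩)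
          have hB := hmem (a + b - 1, 2, 0) (Or.inr ⟨0, by norm_num⟩)
          rw [hf] at hA hB
          simp only [hc0, hm1] at hA hB
          rcases hA with ⟨k, hk⟩ | ⟨k, hk⟩
          · have : (1 : ℝ) = 4 * k + 2 := by linarith [hk]
            have : (1 : ℤ) = 4 * k + 2 := by exact_mod_cast this
            omega
          · have h2 : (2 * m + 1 + (2 * n + 1) - 2 : ℝ) = 4 * k + 2 := by
              rw [ham, hbn] at hk; push_cast at hk ⊢; linarith
            have h2' : (2 * m + 1 + (2 * n + 1) - 2 : ℤ) = 4 * k + 2 := by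
              exact_mod_cast h2
            rcases hB with ⟨j, hj⟩ | ⟨j, hj⟩
            · have h3 : (2 * m + 1 + 2 - (2 * n + 1) : ℝ) = 4 * j + 2 := by
                rw [ham, hbn] at hj; push_cast at hj ⊢; linarith
              have h3' : (2 * m + 1 + 2 - (2 * n + 1) : ℤ) = 4 * j + 2 := by
                exact_mod_cast h3
              omega
            · have : (1 : ℝ) = 4 * j + 2 := by linarith [hj]
              have : (1 : ℤ) = 4 * j + 2 := by exact_mod_cast this
              omega
      · -- generic case: both slopes nonzero, countability contradiction on line x = 2
        refine aux_countable (a + c * (2 - a) + s * b) (-s)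
          (b + s * (2 - a) - c * b) c (by simpa using hs0) hc0 ?_
        intro t
        have h := hmem (2, t, 0) (Or.inl ⟨0, by norm_num⟩)
        rw [hf] at h
        rcases h with ⟨k, hk⟩ | ⟨k, hk⟩
        · exact Or.inl ⟨k, by simp only at hk; linarith [hk]⟩
        · exact Or.inr ⟨k, by simp only at hk; linarith [hk]⟩
  obtain ⟨hs0, hc1⟩ := key
  intro q
  rw [hf]
  simp only [hs0, hc1]
  ext <;> simp <;> ring
end

section
/- The box R = [-2,2] × [-2,2] × [-2√2, 2√2] ⊂ ℝ³ is covered by the union of the 30 closed balls of radius √2 centered at the points (±1, ±1, 2√2 j) for j ∈ {-1,0,1} and at the points (j, k, ±√2) for j, k ∈ {-2, 0, 2}. -/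
open Real

lemma coord_key (a : ℝ) (h1 : -2 ≤ a) (h2 : a ≤ 2) :
    (a - (if 0 ≤ a then (1:ℝ) else -1))^2
      + (a - (if a < -1 then (-2:ℝ) else if a ≤ 1 then 0 else 2))^2 ≤ 1 := by
  split_ifs <;> nlinarith

set_option maxHeartbeats 1600000 in
/-- The box R = [-2,2] × [-2,2] × [-2√2, 2√2] ⊂ ℝ³ is covered by the
union of the 30 closed balls of radius √2 centered at (±1, ±1, 2√2 j), j ∈ {-1,0,1},
and at (j, k, ±√2), j, k ∈ {-2, 0, 2}. -/
theorem stmt_7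
    (x : EuclideanSpace ℝ (Fin 3))
    (hx0 : x 0 ∈ Set.Icc (-2 : ℝ) 2)
    (hx1 : x 1 ∈ Set.Icc (-2 : ℝ) 2)
    (hx2 : x 2 ∈ Set.Icc (-2 * Real.sqrt 2) (2 * Real.sqrt 2)) :
    ∃ c : EuclideanSpace ℝ (Fin 3),
      (((c 0 = 1 ∨ c 0 = -1) ∧ (c 1 = 1 ∨ c 1 = -1) ∧
          (∃ j : ℤ, (j = -1 ∨ j = 0 ∨ j = 1) ∧ c 2 = 2 * Real.sqrt 2 * j)) ∨
        ((c 0 = -2 ∨ c 0 = 0 ∨ c 0 = 2) ∧ (c 1 = -2 ∨ c 1 = 0 ∨ c 1 = 2) ∧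
          (c 2 = Real.sqrt 2 ∨ c 2 = -Real.sqrt 2))) ∧
      dist x c ≤ Real.sqrt 2 := by
  obtain ⟨ha1, ha2⟩ := hx0
  obtain ⟨hb1, hb2⟩ := hx1
  obtain ⟨hc1, hc2⟩ := hx2
  set a := x 0 with ha
  set b := x 1 with hb
  set z := x 2 with hz
  have hs2 : Real.sqrt 2 ^ 2 = 2 := Real.sq_sqrt (by norm_num)
  have hs1 : 1 ≤ Real.sqrt 2 := by nlinarith [Real.sqrt_nonneg 2]
  set s := Real.sqrt 2 with hsdef
  set σa : ℝ := if 0 ≤ a then 1 else -1 with hσa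
  set ja : ℝ := if a < -1 then -2 else if a ≤ 1 then 0 else 2 with hja
  set σb : ℝ := if 0 ≤ b then 1 else -1 with hσb
  set jb : ℝ := if b < -1 then -2 else if b ≤ 1 then 0 else 2 with hjb
  set jz : ℤ := if z < -s then -1 else if z ≤ s then 0 else 1 with hjz
  set σz : ℝ := if 0 ≤ z then s else -s with hσz
  have keya : (a - σa)^2 + (a - ja)^2 ≤ 1 := coord_key a ha1 ha2
  have keyb : (b - σb)^2 + (b - jb)^2 ≤ 1 := coord_key b hb1 hb2
  have keyz : (z - 2 * s * jz)^2 + (z - σz)^2 ≤ 2 := by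
    rw [hjz, hσz]
    split_ifs with h1 h2 h3 h4 h5 h6 <;> push_cast <;> nlinarith
  by_cases H : (a - σa)^2 + (b - σb)^2 + (z - 2 * s * jz)^2 ≤ 2
  · refine ⟨WithLp.toLp 2 ![σa, σb, 2 * s * jz], ?_, ?_⟩
    · left
      refine ⟨?_, ?_, jz, ?_, ?_⟩
      · rw [hσa]; split_ifs <;> simp
      · rw [hσb]; split_ifs <;> simp
      · rw [hjz]; split_ifs <;> simp
      · simp
    · rw [EuclideanSpace.dist_eq]
      apply Real.sqrt_le_sqrt
      rw [Fin.sum_univ_three]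
      simp only [Matrix.cons_val_zero, Matrix.cons_val_one, Matrix.head_cons,
        Matrix.cons_val_two, Matrix.tail_cons, Real.dist_eq, sq_abs, PiLp.toLp_apply]
      exact H
  · have H2 : (a - ja)^2 + (b - jb)^2 + (z - σz)^2 ≤ 2 := by
      push_neg at H; linarith
    refine ⟨WithLp.toLp 2 ![ja, jb, σz], ?_, ?_⟩
    · right
      refine ⟨?_, ?_, ?_⟩
      · rw [hja]; split_ifs <;> simp
      · rw [hjb]; split_ifs <;> simp
      · rw [hσz]; split_ifs <;> simp
    · rw [EuclideanSpace.dist_eq]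
      apply Real.sqrt_le_sqrt
      rw [Fin.sum_univ_three]
      simp only [Matrix.cons_val_zero, Matrix.cons_val_one, Matrix.head_cons,
        Matrix.cons_val_two, Matrix.tail_cons, Real.dist_eq, sq_abs, PiLp.toLp_apply]
      exact H2
end
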